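/- arXiv:q-alg/9603016 — 2 statements merged into one kernel-verified Lean document; each statement's English description precedes it below -/
import Mathlib

section
/- Let M be a unital associative k-algebra, V a k-vector space, and e ∈ V. Suppose there are linear maps σ̂ : V ⊗ V → M ⊗ V and ρ̂ : V ⊗ M → M ⊗ V satisfying: (a) ρ̂(e ⊗ x) = x ⊗ e and ρ̂(v ⊗ 1) = 1 ⊗ v; (b) ρ̂ ∘ (id_V ⊗ μ) = (μ ⊗ id_V) ∘ (id_M ⊗ ρ̂) ∘ (ρ̂ ⊗ id_M); (c) σ̂(e ⊗ v) = σ̂(v ⊗ e) = 1 ⊗ v; (d) (μ ⊗ id_V)∘(id_M ⊗ σ̂)∘(ρ̂ ⊗ id_V)∘(id_V ⊗ σ̂) = (μ ⊗ id_V)∘(id_M ⊗ σ̂)∘(σ̂ ⊗ id_V); (e) (μ ⊗ id_V)∘(id_M ⊗ σ̂)∘(ρ̂ ⊗ id_V)∘(id_V ⊗ ρ̂) = (μ ⊗ id_V)∘(id_M ⊗ ρ̂)∘(σ̂ ⊗ id_M). Then M ⊗ V with product μ_{M⊗V} = (μ² ⊗ id_V)∘(id_M² ⊗ σ̂)∘(id_M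 ⊗ ρ̂ ⊗ id_V) is an associative unital algebra with unit 1 ⊗ e, and it satisfies (x ⊗ e)(y ⊗ v) = xy ⊗ v for all x, y ∈ M, v ∈ V. -/
open TensorProduct LinearMap

noncomputable section

namespace CrossGen

variable (k : Type) [Field k] (M : Type) [Ring M] [Algebra k M]
  (V : Type) [AddCommGroup V] [Module k V]

/-- multiplication of `M` as a linear map -/
abbrev μ : M ⊗[k] M →ₗ[k] M := LinearMap.mul' k M

/-- multiplication of the first two factors: `x ⊗ (y ⊗ v) ↦ xy ⊗ v` -/
def mulMV : M ⊗[k] (M ⊗[k] V) →ₗ[k] M ⊗[k] V :=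
  map (μ k M) LinearMap.id ∘ₗ (TensorProduct.assoc k M M V).symm.toLinearMap

variable (ρh : V ⊗[k] M →ₗ[k] M ⊗[k] V) (σh : V ⊗[k] V →ₗ[k] M ⊗[k] V)

/-- condition (b): `ρ̂∘(id⊗μ) = (μ⊗id)∘(id⊗ρ̂)∘(ρ̂⊗id)`; this is its right hand
side as a map `V ⊗ (M ⊗ M) → M ⊗ V`. -/
def rhoMul : V ⊗[k] (M ⊗[k] M) →ₗ[k] M ⊗[k] V :=
  map (μ k M) LinearMap.id
    ∘ₗ (TensorProduct.assoc k M M V).symm.toLinearMap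
    ∘ₗ map LinearMap.id ρh
    ∘ₗ (TensorProduct.assoc k M V M).toLinearMap
    ∘ₗ map ρh LinearMap.id
    ∘ₗ (TensorProduct.assoc k V M M).symm.toLinearMap

/-- condition (d), left hand side: `(μ⊗id)∘(id⊗σ̂)∘(ρ̂⊗id)∘(id⊗σ̂)` -/
def CondDLHS : V ⊗[k] (V ⊗[k] V) →ₗ[k] M ⊗[k] V :=
  mulMV k M V
    ∘ₗ map LinearMap.id σh
    ∘ₗ (TensorProduct.assoc k M V V).toLinearMap
    ∘ₗ map ρh LinearMap.id
    ∘ₗ (TensorProduct.assoc k V M V).symm.toLinearMap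
    ∘ₗ map LinearMap.id σh

/-- condition (d), right hand side: `(μ⊗id)∘(id⊗σ̂)∘(σ̂⊗id)` -/
def CondDRHS : V ⊗[k] (V ⊗[k] V) →ₗ[k] M ⊗[k] V :=
  mulMV k M V
    ∘ₗ map LinearMap.id σh
    ∘ₗ (TensorProduct.assoc k M V V).toLinearMap
    ∘ₗ map σh LinearMap.id
    ∘ₗ (TensorProduct.assoc k V V V).symm.toLinearMap

/-- condition (e), left hand side: `(μ⊗id)∘(id⊗σ̂)∘(ρ̂⊗id)∘(id⊗ρ̂)` -/
def CondELHS : V ⊗[k] (V ⊗[k] M) →ₗ[k] M ⊗[k] V :=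
  mulMV k M V
    ∘ₗ map LinearMap.id σh
    ∘ₗ (TensorProduct.assoc k M V V).toLinearMap
    ∘ₗ map ρh LinearMap.id
    ∘ₗ (TensorProduct.assoc k V M V).symm.toLinearMap
    ∘ₗ map LinearMap.id ρh

/-- condition (e), right hand side: `(μ⊗id)∘(id⊗ρ̂)∘(σ̂⊗id)` -/
def CondERHS : V ⊗[k] (V ⊗[k] M) →ₗ[k] M ⊗[k] V :=
  mulMV k M V
    ∘ₗ map LinearMap.id ρh
    ∘ₗ (TensorProduct.assoc k M V M).toLinearMap
    ∘ₗ map σh LinearMap.id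
    ∘ₗ (TensorProduct.assoc k V V M).symm.toLinearMap

/-- the product `μ_{M⊗V} = (μ²⊗id)∘(id²⊗σ̂)∘(id⊗ρ̂⊗id)` on `M ⊗ V` -/
def prodMV : (M ⊗[k] V) ⊗[k] (M ⊗[k] V) →ₗ[k] M ⊗[k] V :=
  mulMV k M V
    ∘ₗ map LinearMap.id (mulMV k M V)
    ∘ₗ map LinearMap.id
        (map LinearMap.id σh ∘ₗ (TensorProduct.assoc k M V V).toLinearMap)
    ∘ₗ map LinearMap.id
        (map ρh LinearMap.id ∘ₗ (TensorProduct.assoc k V M V).symm.toLinearMap)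
    ∘ₗ (TensorProduct.assoc k M V (M ⊗[k] V)).toLinearMap

/-! ### Auxiliary machinery for the proof -/

/-- `act f (p ⊗ t) = mulMV (p ⊗ f t)`. -/
def act (f : V →ₗ[k] M ⊗[k] V) : M ⊗[k] V →ₗ[k] M ⊗[k] V :=
  mulMV k M V ∘ₗ lTensor M f

/-- `lam (v ⊗ (y ⊗ w)) = Σ y_i σ̂(v_i ⊗ w)` where `ρ̂(v ⊗ y) = Σ y_i ⊗ v_i`. -/
def lam : V ⊗[k] (M ⊗[k] V) →ₗ[k] M ⊗[k] V :=
  mulMV k M V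
    ∘ₗ map LinearMap.id σh
    ∘ₗ (TensorProduct.assoc k M V V).toLinearMap
    ∘ₗ map ρh LinearMap.id
    ∘ₗ (TensorProduct.assoc k V M V).symm.toLinearMap

lemma mulMV_tmul (x y : M) (v : V) :
    mulMV k M V (x ⊗ₜ (y ⊗ₜ v)) = (x * y) ⊗ₜ v := by
  simp [mulMV]

lemma mulMV_mulMV (x y : M) (c : M ⊗[k] V) :
    mulMV k M V (x ⊗ₜ mulMV k M V (y ⊗ₜ c)) = mulMV k M V ((x * y) ⊗ₜ c) := by
  induction c using TensorProduct.induction_on with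
  | zero => simp
  | tmul z u => simp [mulMV_tmul, mul_assoc]
  | add c c' h h' => simp only [tmul_add, map_add, h, h']

lemma mulMV_one (c : M ⊗[k] V) : mulMV k M V ((1 : M) ⊗ₜ c) = c := by
  induction c using TensorProduct.induction_on with
  | zero => simp
  | tmul z u => simp [mulMV_tmul]
  | add c c' h h' => simp only [tmul_add, map_add, h, h']

lemma act_tmul (f : V →ₗ[k] M ⊗[k] V) (p : M) (t : V) :
    act k M V f (p ⊗ₜ t) = mulMV k M V (p ⊗ₜ f t) := by
  simp [act]

lemma act_mulMV (f : V →ₗ[k] M ⊗[k] V) (x : M) (Q : M ⊗[k] V) :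
    act k M V f (mulMV k M V (x ⊗ₜ Q)) = mulMV k M V (x ⊗ₜ act k M V f Q) := by
  induction Q using TensorProduct.induction_on with
  | zero => simp
  | tmul q s => rw [mulMV_tmul, act_tmul, act_tmul, mulMV_mulMV]
  | add Q Q' h h' => simp only [tmul_add, map_add, h, h']

lemma act_ext {f g : V →ₗ[k] M ⊗[k] V} (h : ∀ t, f t = g t) (P : M ⊗[k] V) :
    act k M V f P = act k M V g P := by
  rw [show f = g from LinearMap.ext h]

lemma act_act (f g : V →ₗ[k] M ⊗[k] V) (P : M ⊗[k] V) :
    act k M V f (act k M V g P) = act k M V (act k M V f ∘ₗ g) P := by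
  induction P using TensorProduct.induction_on with
  | zero => simp
  | tmul p t => rw [act_tmul, act_mulMV, act_tmul]; rfl
  | add P P' h h' => simp only [map_add, h, h']

lemma act_add (f g : V →ₗ[k] M ⊗[k] V) (P : M ⊗[k] V) :
    act k M V (f + g) P = act k M V f P + act k M V g P := by
  simp [act, lTensor_add]

/-- folding `mulMV`. -/
lemma mulMV_def (c : M ⊗[k] (M ⊗[k] V)) :
    map (μ k M) LinearMap.id ((TensorProduct.assoc k M M V).symm c) = mulMV k M V c := rfl

/-- the key evaluation lemma. -/
lemma key {X : Type} [AddCommGroup X] [Module k X]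
    (f : V ⊗[k] X →ₗ[k] M ⊗[k] V) (x : X) (P : M ⊗[k] V) :
    mulMV k M V (map LinearMap.id f ((TensorProduct.assoc k M V X) (P ⊗ₜ x))) =
      act k M V (f ∘ₗ (mk k V X).flip x) P := by
  induction P using TensorProduct.induction_on with
  | zero => simp
  | tmul p t => rw [assoc_tmul, map_tmul, act_tmul]; rfl
  | add P P' h h' => simp only [add_tmul, map_add, h, h']

lemma lam_tmul (v : V) (y : M) (w : V) :
    lam k M V ρh σh (v ⊗ₜ (y ⊗ₜ w)) =
      act k M V (σh ∘ₗ (mk k V V).flip w) (ρh (v ⊗ₜ y)) := by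
  rw [lam]
  simp only [coe_comp, LinearEquiv.coe_coe, Function.comp_apply, assoc_symm_tmul, map_tmul,
    id_coe, id_eq]
  exact key k M V σh w (ρh (v ⊗ₜ y))

lemma rhoMul_tmul (v : V) (y z : M) :
    rhoMul k M V ρh (v ⊗ₜ (y ⊗ₜ z)) =
      act k M V (ρh ∘ₗ (mk k V M).flip z) (ρh (v ⊗ₜ y)) := by
  rw [rhoMul]
  simp only [coe_comp, LinearEquiv.coe_coe, Function.comp_apply, assoc_symm_tmul, map_tmul,
    id_coe, id_eq, mulMV_def]
  exact key k M V ρh z (ρh (v ⊗ₜ y))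

/-- condition (b), pointwise. -/
lemma condB_pt (hb : ρh ∘ₗ map LinearMap.id (μ k M) = rhoMul k M V ρh)
    (v : V) (y z : M) :
    ρh (v ⊗ₜ (y * z)) = act k M V (ρh ∘ₗ (mk k V M).flip z) (ρh (v ⊗ₜ y)) := by
  have h := LinearMap.congr_fun hb (v ⊗ₜ (y ⊗ₜ z))
  simp only [coe_comp, Function.comp_apply, map_tmul, id_coe, id_eq, mul'_apply] at h
  rw [h, rhoMul_tmul]

/-- condition (d), pointwise. -/
lemma condD_pt (hd : CondDLHS k M V ρh σh = CondDRHS k M V σh) (t s u : V) :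
    lam k M V ρh σh (t ⊗ₜ σh (s ⊗ₜ u)) =
      act k M V (σh ∘ₗ (mk k V V).flip u) (σh (t ⊗ₜ s)) := by
  have h := LinearMap.congr_fun hd (t ⊗ₜ (s ⊗ₜ u))
  rw [CondDLHS, CondDRHS] at h
  simp only [coe_comp, LinearEquiv.coe_coe, Function.comp_apply, map_tmul, id_coe, id_eq,
    assoc_symm_tmul] at h
  rw [key] at h
  rw [lam]
  simp only [coe_comp, LinearEquiv.coe_coe, Function.comp_apply]
  exact h

/-- condition (e), pointwise. -/
lemma condE_pt (he : CondELHS k M V ρh σh = CondERHS k M V ρh σh) (t w : V) (z : M) :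
    lam k M V ρh σh (t ⊗ₜ ρh (w ⊗ₜ z)) =
      act k M V (ρh ∘ₗ (mk k V M).flip z) (σh (t ⊗ₜ w)) := by
  have h := LinearMap.congr_fun he (t ⊗ₜ (w ⊗ₜ z))
  rw [CondELHS, CondERHS] at h
  simp only [coe_comp, LinearEquiv.coe_coe, Function.comp_apply, map_tmul, id_coe, id_eq,
    assoc_symm_tmul] at h
  rw [key] at h
  rw [lam]
  simp only [coe_comp, LinearEquiv.coe_coe, Function.comp_apply]
  exact h

lemma prodMV_tmul_pure (x : M) (v : V) (y : M) (w : V) :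
    prodMV k M V ρh σh ((x ⊗ₜ v) ⊗ₜ (y ⊗ₜ w)) =
      mulMV k M V (x ⊗ₜ lam k M V ρh σh (v ⊗ₜ (y ⊗ₜ w))) := by
  rw [prodMV, lam]
  simp only [coe_comp, LinearEquiv.coe_coe, Function.comp_apply, assoc_tmul, map_tmul,
    id_coe, id_eq, assoc_symm_tmul]

lemma prodMV_tmul (x : M) (v : V) (c : M ⊗[k] V) :
    prodMV k M V ρh σh ((x ⊗ₜ v) ⊗ₜ c) =
      mulMV k M V (x ⊗ₜ lam k M V ρh σh (v ⊗ₜ c)) := by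
  induction c using TensorProduct.induction_on with
  | zero => simp
  | tmul y w => exact prodMV_tmul_pure k M V ρh σh x v y w
  | add c c' h h' => simp only [tmul_add, map_add, h, h']

lemma prodMV_mulMV (x : M) (D : M ⊗[k] V) (c : M ⊗[k] V) :
    prodMV k M V ρh σh (mulMV k M V (x ⊗ₜ D) ⊗ₜ c) =
      mulMV k M V (x ⊗ₜ prodMV k M V ρh σh (D ⊗ₜ c)) := by
  induction D using TensorProduct.induction_on with
  | zero => simp
  | tmul p t => rw [mulMV_tmul, prodMV_tmul, prodMV_tmul, mulMV_mulMV]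
  | add D D' h h' => simp only [tmul_add, map_add, add_tmul, h, h']

lemma prodMV_act (z : M) (u : V) (S : M ⊗[k] V) :
    prodMV k M V ρh σh (S ⊗ₜ (z ⊗ₜ u)) =
      act k M V (act k M V (σh ∘ₗ (mk k V V).flip u) ∘ₗ (ρh ∘ₗ (mk k V M).flip z)) S := by
  induction S using TensorProduct.induction_on with
  | zero => simp
  | tmul q s =>
      rw [prodMV_tmul, lam_tmul, act_tmul]
      simp only [coe_comp, Function.comp_apply, mk_apply, flip_apply]
  | add S S' h h' => simp only [add_tmul, map_add, h, h']

/-- condition (b), with a general second tensorand. -/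
lemma lam_mul (hb : ρh ∘ₗ map LinearMap.id (μ k M) = rhoMul k M V ρh)
    (v : V) (y : M) (c : M ⊗[k] V) :
    lam k M V ρh σh (v ⊗ₜ mulMV k M V (y ⊗ₜ c)) =
      act k M V (lam k M V ρh σh ∘ₗ (mk k V (M ⊗[k] V)).flip c) (ρh (v ⊗ₜ y)) := by
  induction c using TensorProduct.induction_on with
  | zero => simp [act]
  | tmul z u =>
      rw [mulMV_tmul, lam_tmul, condB_pt k M V ρh hb, act_act]
      refine act_ext k M V (fun t => ?_) _
      simp only [coe_comp, Function.comp_apply, mk_apply, flip_apply]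
      rw [lam_tmul]
  | add c c' h h' =>
      have hflip : (mk k V (M ⊗[k] V)).flip (c + c') =
          (mk k V (M ⊗[k] V)).flip c + (mk k V (M ⊗[k] V)).flip c' := map_add _ _ _
      rw [tmul_add, map_add, tmul_add, map_add, h, h', hflip, comp_add, act_add]

/-- the `(∗∗∗)` swap lemma: uses conditions (b) and (d). -/
lemma act_lam_swap (hb : ρh ∘ₗ map LinearMap.id (μ k M) = rhoMul k M V ρh)
    (hd : CondDLHS k M V ρh σh = CondDRHS k M V σh) (t u : V) (Q : M ⊗[k] V) :
    act k M V (σh ∘ₗ (mk k V V).flip u) (lam k M V ρh σh (t ⊗ₜ Q)) =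
      lam k M V ρh σh (t ⊗ₜ act k M V (σh ∘ₗ (mk k V V).flip u) Q) := by
  induction Q using TensorProduct.induction_on with
  | zero => simp
  | tmul q s =>
      rw [act_tmul]
      simp only [coe_comp, Function.comp_apply, mk_apply, flip_apply]
      rw [lam_tmul, lam_mul k M V ρh σh hb, act_act]
      refine act_ext k M V (fun t' => ?_) _
      simp only [coe_comp, Function.comp_apply, mk_apply, flip_apply]
      rw [condD_pt k M V ρh σh hd]
  | add Q Q' h h' => simp only [tmul_add, map_add, h, h']

/-- the core associativity identity `(∗)`. -/
lemma star (hb : ρh ∘ₗ map LinearMap.id (μ k M) = rhoMul k M V ρh)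
    (hd : CondDLHS k M V ρh σh = CondDRHS k M V σh)
    (he : CondELHS k M V ρh σh = CondERHS k M V ρh σh)
    (v : V) (y : M) (w : V) (z : M) (u : V) :
    prodMV k M V ρh σh (lam k M V ρh σh (v ⊗ₜ (y ⊗ₜ w)) ⊗ₜ (z ⊗ₜ u)) =
      lam k M V ρh σh (v ⊗ₜ mulMV k M V (y ⊗ₜ lam k M V ρh σh (w ⊗ₜ (z ⊗ₜ u)))) := by
  rw [lam_mul k M V ρh σh hb, lam_tmul, prodMV_act, act_act]
  refine act_ext k M V (fun t => ?_) _
  simp only [coe_comp, Function.comp_apply, mk_apply, flip_apply]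
  rw [← act_act, ← condE_pt k M V ρh σh he, act_lam_swap k M V ρh σh hb hd, ← lam_tmul]

lemma lam_e (e : V) (ha1 : ∀ x : M, ρh (e ⊗ₜ x) = x ⊗ₜ e)
    (hc : ∀ v : V, σh (e ⊗ₜ v) = (1 : M) ⊗ₜ v ∧ σh (v ⊗ₜ e) = (1 : M) ⊗ₜ v)
    (y : M) (w : V) :
    lam k M V ρh σh (e ⊗ₜ (y ⊗ₜ w)) = y ⊗ₜ w := by
  rw [lam_tmul, ha1, act_tmul]
  simp only [coe_comp, Function.comp_apply, mk_apply, flip_apply]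
  rw [(hc w).1, mulMV_tmul, mul_one]

/-- (Proposition 2.1, sufficiency) If `σ̂ : V ⊗ V → M ⊗ V` and
`ρ̂ : V ⊗ M → M ⊗ V` satisfy conditions (a)–(e), then `M ⊗ V` with the product
`(μ²⊗id)∘(id²⊗σ̂)∘(id⊗ρ̂⊗id)` is an associative unital algebra with unit `1 ⊗ e`,
and `(x ⊗ e)(y ⊗ v) = xy ⊗ v`. -/
theorem crossed_product_general (e : V)
    (ha1 : ∀ x : M, ρh (e ⊗ₜ x) = x ⊗ₜ e)
    (ha2 : ∀ v : V, ρh (v ⊗ₜ (1 : M)) = (1 : M) ⊗ₜ v)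
    (hb : ρh ∘ₗ map LinearMap.id (μ k M) = rhoMul k M V ρh)
    (hc : ∀ v : V, σh (e ⊗ₜ v) = (1 : M) ⊗ₜ v ∧ σh (v ⊗ₜ e) = (1 : M) ⊗ₜ v)
    (hd : CondDLHS k M V ρh σh = CondDRHS k M V σh)
    (he : CondELHS k M V ρh σh = CondERHS k M V ρh σh) :
    (∀ a b c : M ⊗[k] V,
      prodMV k M V ρh σh (prodMV k M V ρh σh (a ⊗ₜ b) ⊗ₜ c) =
        prodMV k M V ρh σh (a ⊗ₜ prodMV k M V ρh σh (b ⊗ₜ c))) ∧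
    (∀ a : M ⊗[k] V,
      prodMV k M V ρh σh (((1 : M) ⊗ₜ e) ⊗ₜ a) = a ∧
      prodMV k M V ρh σh (a ⊗ₜ ((1 : M) ⊗ₜ e)) = a) ∧
    (∀ (x y : M) (v : V),
      prodMV k M V ρh σh ((x ⊗ₜ e) ⊗ₜ (y ⊗ₜ v)) = (x * y) ⊗ₜ v) := by
  refine ⟨?_, ?_, ?_⟩
  · -- associativity
    intro a b c
    induction a using TensorProduct.induction_on with
    | zero => simp
    | add a a' h h' => simp only [add_tmul, map_add, h, h']
    | tmul x v =>
      induction b using TensorProduct.induction_on with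
      | zero => simp
      | add b b' h h' => simp only [add_tmul, tmul_add, map_add, h, h']
      | tmul y w =>
        induction c using TensorProduct.induction_on with
        | zero => simp
        | add c c' h h' => simp only [tmul_add, map_add, h, h']
        | tmul z u =>
          rw [prodMV_tmul, prodMV_tmul, prodMV_mulMV, prodMV_tmul,
            star k M V ρh σh hb hd he]
  · -- unit laws
    intro a
    constructor
    · induction a using TensorProduct.induction_on with
      | zero => simp
      | add a a' h h' => simp only [tmul_add, map_add, h, h']
      | tmul y w =>
        rw [prodMV_tmul, lam_e k M V ρh σh e ha1 hc, mulMV_one]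
    · induction a using TensorProduct.induction_on with
      | zero => simp
      | add a a' h h' => simp only [add_tmul, map_add, h, h']
      | tmul x v =>
        rw [prodMV_tmul, lam_tmul, ha2, act_tmul]
        simp only [coe_comp, Function.comp_apply, mk_apply, flip_apply]
        rw [(hc v).2, mulMV_tmul, one_mul, mulMV_tmul, mul_one]
  · -- (x ⊗ e)(y ⊗ v) = xy ⊗ v
    intro x y v
    rw [prodMV_tmul, lam_e k M V ρh σh e ha1 hc, mulMV_tmul]

end CrossGen
end
end

section
/- Let M be a unital associative k-algebra, V a k-vector space, e ∈ V, and suppose M ⊗ V carries an associative unital algebra structure with unit 1 ⊗ e such that (x ⊗ e)(y ⊗ v) = xy ⊗ v for all x, y ∈ M, v ∈ V. Define ρ̂(v ⊗ x) = (1 ⊗ v)(x ⊗ e) and σ̂(v ⊗ w) = (1 ⊗ v)(1 ⊗ w). Then: ρ̂(e ⊗ x) = x ⊗ e, ρ̂(v ⊗ 1) = 1 ⊗ v, σ̂(e ⊗ v) = σ̂(v ⊗ e) = 1 ⊗ v, ρ̂(v ⊗ xy) = (μ ⊗ id_V)∘(id_M ⊗ ρ̂)∘(ρ̂ ⊗ id_M)(v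 ⊗ x ⊗ y), and the product on M ⊗ V equals (μ² ⊗ id_V)∘(id_M² ⊗ σ̂)∘(id_M ⊗ ρ̂ ⊗ id_V). -/
open TensorProduct LinearMap

noncomputable section

namespace CrossGen

variable (k : Type) [Field k] (M : Type) [Ring M] [Algebra k M]
  (V : Type) [AddCommGroup V] [Module k V]

variable (ρh : V ⊗[k] M →ₗ[k] M ⊗[k] V) (σh : V ⊗[k] V →ₗ[k] M ⊗[k] V)

section Converse
variable (mul : (M ⊗[k] V) →ₗ[k] (M ⊗[k] V) →ₗ[k] (M ⊗[k] V))

/-- `ρ̂(v ⊗ x) = (1 ⊗ v)(x ⊗ e)` induced by a product on `M ⊗ V` -/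
def rhOf (e : V) : V ⊗[k] M →ₗ[k] M ⊗[k] V :=
  TensorProduct.lift mul
    ∘ₗ map (TensorProduct.mk k M V 1) ((TensorProduct.mk k M V).flip e)

/-- `σ̂(v ⊗ w) = (1 ⊗ v)(1 ⊗ w)` induced by a product on `M ⊗ V` -/
def shOf : V ⊗[k] V →ₗ[k] M ⊗[k] V :=
  TensorProduct.lift mul
    ∘ₗ map (TensorProduct.mk k M V 1) (TensorProduct.mk k M V 1)

end Converse

end CrossGen

namespace CrossGen

/-- (Proposition 2.1, necessity) If `M ⊗ V` is an associative unital
algebra with unit `1 ⊗ e` satisfying `(x ⊗ e)(y ⊗ v) = xy ⊗ v`, then the maps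
`ρ̂(v ⊗ x) = (1 ⊗ v)(x ⊗ e)` and `σ̂(v ⊗ w) = (1 ⊗ v)(1 ⊗ w)` satisfy conditions
(a)–(c), the multiplicativity condition (b), and the product equals
`(μ²⊗id)∘(id²⊗σ̂)∘(id⊗ρ̂⊗id)`. -/
theorem crossed_product_general_converse
    (k : Type) [Field k] (M : Type) [Ring M] [Algebra k M]
    (V : Type) [AddCommGroup V] [Module k V]
    (mul : (M ⊗[k] V) →ₗ[k] (M ⊗[k] V) →ₗ[k] (M ⊗[k] V)) (e : V)
    (hassoc : ∀ a b c : M ⊗[k] V, mul (mul a b) c = mul a (mul b c))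
    (hunit : ∀ a : M ⊗[k] V, mul ((1 : M) ⊗ₜ e) a = a ∧ mul a ((1 : M) ⊗ₜ e) = a)
    (hleft : ∀ (x y : M) (v : V), mul (x ⊗ₜ e) (y ⊗ₜ v) = (x * y) ⊗ₜ v) :
    (∀ x : M, rhOf k M V mul e (e ⊗ₜ x) = x ⊗ₜ e) ∧
    (∀ v : V, rhOf k M V mul e (v ⊗ₜ (1 : M)) = (1 : M) ⊗ₜ v) ∧
    (∀ v : V, shOf k M V mul (e ⊗ₜ v) = (1 : M) ⊗ₜ v ∧
      shOf k M V mul (v ⊗ₜ e) = (1 : M) ⊗ₜ v) ∧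
    (rhOf k M V mul e ∘ₗ map LinearMap.id (μ k M) =
      rhoMul k M V (rhOf k M V mul e)) ∧
    TensorProduct.lift mul = prodMV k M V (rhOf k M V mul e) (shOf k M V mul) := by

  have hρ : ∀ (v : V) (x : M),
      rhOf k M V mul e (v ⊗ₜ x) = mul ((1:M) ⊗ₜ v) (x ⊗ₜ e) := by
    intro v x; simp [rhOf]
  have hσ : ∀ (v w : V),
      shOf k M V mul (v ⊗ₜ w) = mul ((1:M) ⊗ₜ v) ((1:M) ⊗ₜ w) := by
    intro v w; simp [shOf]
  have h1 : ∀ (m : M) (b : M ⊗[k] V), mulMV k M V (m ⊗ₜ b) = mul (m ⊗ₜ e) b := by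
    intro m b
    induction b using TensorProduct.induction_on with
    | zero => simp [mulMV]
    | tmul y v => simp [mulMV, hleft]
    | add b c hb hc => simp only [tmul_add, map_add, hb, hc]
  have hme : ∀ (m : M) (v : V), mul (m ⊗ₜ e) ((1:M) ⊗ₜ v) = m ⊗ₜ v := by
    intro m v; rw [hleft, mul_one]
  have hmulMV : ∀ (a : M ⊗[k] (M ⊗[k] V)),
      map (μ k M) LinearMap.id ((TensorProduct.assoc k M M V).symm a) = mulMV k M V a :=
    fun _ => rfl
  have hF : ∀ (c : M ⊗[k] V) (y : M),
      map (μ k M) LinearMap.id ((TensorProduct.assoc k M M V).symm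
        ((map LinearMap.id (rhOf k M V mul e))
          ((TensorProduct.assoc k M V M) (c ⊗ₜ y))))
      = mul c (y ⊗ₜ e) := by
    intro c y
    induction c using TensorProduct.induction_on with
    | zero => simp
    | tmul m w =>
        rw [assoc_tmul, map_tmul, hmulMV, h1, hρ, LinearMap.id_coe, id_eq,
          ← hassoc, hme]
    | add b c hb hc => simp only [add_tmul, map_add, LinearMap.add_apply, hb, hc]
  have hK : ∀ (c : M ⊗[k] V) (w : V),
      mulMV k M V ((map LinearMap.id (shOf k M V mul))
        ((TensorProduct.assoc k M V V) (c ⊗ₜ w)))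
      = mul c ((1:M) ⊗ₜ w) := by
    intro c w
    induction c using TensorProduct.induction_on with
    | zero => simp
    | tmul m u =>
        rw [assoc_tmul, map_tmul, h1, hσ, LinearMap.id_coe, id_eq, ← hassoc, hme]
    | add b c hb hc => simp only [add_tmul, map_add, LinearMap.add_apply, hb, hc]
  refine ⟨?_, ?_, ?_, ?_, ?_⟩
  · intro x; rw [hρ, (hunit _).1]
  · intro v; rw [hρ, (hunit _).2]
  · intro v; exact ⟨by rw [hσ, (hunit _).1], by rw [hσ, (hunit _).2]⟩
  · apply TensorProduct.ext'
    intro v b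
    induction b using TensorProduct.induction_on with
    | zero => simp
    | tmul x y =>
        simp only [rhoMul, comp_apply, LinearEquiv.coe_coe, map_tmul,
          assoc_symm_tmul, LinearMap.id_coe, id_eq, mul'_apply]
        rw [hF, hρ, hρ, hassoc, hleft]
    | add b c hb hc => simp only [tmul_add, map_add, hb, hc]
  · apply TensorProduct.ext'
    intro a b
    induction a using TensorProduct.induction_on with
    | zero => simp
    | tmul x v =>
        induction b using TensorProduct.induction_on with
        | zero => simp
        | tmul y w =>
            simp only [prodMV, comp_apply, LinearEquiv.coe_coe, map_tmul,
              assoc_tmul, assoc_symm_tmul, LinearMap.id_coe, id_eq, lift.tmul]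
            rw [hK, h1, hρ, ← hassoc, ← hassoc, hme, hassoc, hme]
        | add b c hb hc => simp only [tmul_add, map_add, hb, hc]
    | add a c ha hc => simp only [add_tmul, map_add, ha, hc]


end CrossGen
end
end
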